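/- Let $n \geq 1$, $0 \leq a \leq n-1$, $b = n - a - 1$, and define $\alpha_{p,1} = a + n$, $\alpha_{p,i} = n - i + 1$ for $2 \leq i \leq b+1$, and $\alpha_{p,i} = n - i$ for $b+2 \leq i \leq n$. Then for $b+3 \leq i \leq n$ we have $\prod_{i'=1}^{i-1}(q^{\alpha_{p,i'}} - q^{\alpha_{p,i}}) = q^{(i-1)(n-i)} \frac{q^{a+i}-1}{q^{i-b-1}-1} \prod_{h=1}^{i-1}(q^h - 1)$ in $\mathbb{Q}(q)$. -/

import Mathlib

open Finset

/-! Factoring `q ^ α_i = q ^ (n - i)` out of each of the `i - 1` factors leaves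
`∏ (q ^ (α_{i'} - α_i) - 1)`. The exponent difference is `a + i` for `i' = 1`, and for
`2 ≤ i' ≤ i - 1` the differences run through `1, …, i - 1` skipping only `i - b - 1`; so the
product equals `(q ^ (a + i) - 1) / (q ^ (i - b - 1) - 1) ∏_{h=1}^{i-1} (q ^ h - 1)`. -/

lemma RatFunc.X_pow_ne_one {K : Type*} [Field K] {m : ℕ} (hm : m ≠ 0) :
    (RatFunc.X : RatFunc K) ^ m ≠ 1 := by
  rw [← RatFunc.algebraMap_X, ← map_pow, ← map_one (algebraMap (Polynomial K) (RatFunc K)), Ne,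
    (RatFunc.algebraMap_injective K).eq_iff]
  intro h
  simpa [hm] using congrArg Polynomial.natDegree h

lemma Finset.prod_zpow_sub_zpow {ι K : Type*} [Field K] {x : K} (hx : x ≠ 0) (s : Finset ι)
    (e : ι → ℤ) (c : ℤ) :
    ∏ k ∈ s, (x ^ e k - x ^ c) = x ^ (c * #s) * ∏ k ∈ s, (x ^ (e k - c) - 1) := by
  rw [zpow_mul, zpow_natCast, ← prod_const, ← prod_mul_distrib]
  refine prod_congr rfl fun k _ => ?_
  rw [mul_sub, mul_one, ← zpow_add₀ hx, add_sub_cancel]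

lemma Finset.prod_Icc_reflect_skip {M : Type*} [CommMonoid M] (g : ℤ → M) {b i : ℕ}
    (hbi : b + 2 ≤ i) :
    ∏ k ∈ Icc 2 (i - 1), g (if k ≤ b + 1 then (i : ℤ) - k + 1 else (i : ℤ) - k)
      = ∏ h ∈ (Icc (1 : ℤ) (i - 1)).erase ((i : ℤ) - b - 1), g h := by
  refine prod_nbij' (fun k => if k ≤ b + 1 then (i : ℤ) - k + 1 else (i : ℤ) - k)
    (fun h => if (i : ℤ) - b ≤ h then ((i : ℤ) - h + 1).toNat else ((i : ℤ) - h).toNat)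
    ?_ ?_ ?_ ?_ fun _ _ => rfl <;>
  · intro k hk
    simp only [mem_Icc, mem_erase] at hk ⊢
    split_ifs <;> omega

theorem stmt_2_general (n a b i : ℕ)
    (hi1 : b + 3 ≤ i) (hi2 : i ≤ n)
    (α : ℕ → ℤ)
    (hα1 : α 1 = (a : ℤ) + n)
    (hα2 : ∀ k, 2 ≤ k → k ≤ b + 1 → α k = (n : ℤ) - k + 1)
    (hα3 : ∀ k, b + 2 ≤ k → k ≤ n → α k = (n : ℤ) - k) :
    ∏ i' ∈ Icc 1 (i - 1), ((RatFunc.X : RatFunc ℚ) ^ (α i')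
        - (RatFunc.X : RatFunc ℚ) ^ (α i))
      = (RatFunc.X : RatFunc ℚ) ^ (((i : ℤ) - 1) * ((n : ℤ) - i))
        * (((RatFunc.X : RatFunc ℚ) ^ ((a : ℤ) + i) - 1)
            / ((RatFunc.X : RatFunc ℚ) ^ ((i : ℤ) - b - 1) - 1))
        * ∏ h ∈ Icc (1 : ℤ) ((i : ℤ) - 1), ((RatFunc.X : RatFunc ℚ) ^ h - 1) := by
  set x : RatFunc ℚ := RatFunc.X
  have hαi : α i = n - i := hα3 i (by omega) hi2
  have hgap : ∀ k ∈ Icc 2 (i - 1),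
      α k - α i = if k ≤ b + 1 then (i : ℤ) - k + 1 else (i : ℤ) - k := by
    intro k hk
    rw [mem_Icc] at hk
    split_ifs with hkb
    · rw [hα2 k hk.1 hkb, hαi]; ring
    · rw [hα3 k (by omega) (by omega), hαi]; ring
  have hden : x ^ ((i : ℤ) - b - 1) - 1 ≠ 0 := by
    rw [show (i : ℤ) - b - 1 = ((i - b - 1 : ℕ) : ℤ) by omega, zpow_natCast]
    exact sub_ne_zero.2 (RatFunc.X_pow_ne_one (by omega))
  rw [prod_zpow_sub_zpow RatFunc.X_ne_zero, Nat.card_Icc,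
    ← insert_Icc_add_one_left_eq_Icc (by omega : 1 ≤ i - 1), prod_insert (by simp),
    one_add_one_eq_two, prod_congr rfl fun k hk => by rw [hgap k hk],
    prod_Icc_reflect_skip (fun h => x ^ h - 1) (by omega),
    ← mul_prod_erase (Icc (1 : ℤ) (i - 1)) (fun h => x ^ h - 1)
      (by simp only [mem_Icc]; omega : (i : ℤ) - b - 1 ∈ _),
    hα1, hαi, show ((i - 1 + 1 - 1 : ℕ) : ℤ) = i - 1 by omega]
  field_simp
  ring_nf

/-- For `n ≥ 1`, `0 ≤ a ≤ n-1`, `b = n - a - 1` (encoded as `a + b + 1 = n`), with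
`α_{p,1} = a+n`, `α_{p,i} = n-i+1` for `2 ≤ i ≤ b+1`, `α_{p,i} = n-i` for `b+2 ≤ i ≤ n`,
and `b+3 ≤ i ≤ n`:
`∏_{i'=1}^{i-1} (q^{α_{p,i'}} - q^{α_{p,i}})
  = q^{(i-1)(n-i)} (q^{a+i}-1)/(q^{i-b-1}-1) ∏_{h=1}^{i-1}(q^h - 1)` in `ℚ(q)`. -/
theorem stmt_2 (n a b i : ℕ) (hn : 1 ≤ n) (hab : a + b + 1 = n)
    (hi1 : b + 3 ≤ i) (hi2 : i ≤ n)
    (α : ℕ → ℤ)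
    (hα1 : α 1 = (a : ℤ) + n)
    (hα2 : ∀ k, 2 ≤ k → k ≤ b + 1 → α k = (n : ℤ) - k + 1)
    (hα3 : ∀ k, b + 2 ≤ k → k ≤ n → α k = (n : ℤ) - k) :
    ∏ i' ∈ Icc 1 (i - 1), ((RatFunc.X : RatFunc ℚ) ^ (α i')
        - (RatFunc.X : RatFunc ℚ) ^ (α i))
      = (RatFunc.X : RatFunc ℚ) ^ (((i : ℤ) - 1) * ((n : ℤ) - i))
        * (((RatFunc.X : RatFunc ℚ) ^ ((a : ℤ) + i) - 1)
            / ((RatFunc.X : RatFunc ℚ) ^ ((i : ℤ) - b - 1) - 1))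
        * ∏ h ∈ Icc (1 : ℤ) ((i : ℤ) - 1), ((RatFunc.X : RatFunc ℚ) ^ h - 1) :=
  stmt_2_general n a b i hi1 hi2 α hα1 hα2 hα3
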